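/- arXiv:2006.14816 — 3 statements merged into one kernel-verified Lean document; each statement's English description precedes it below -/
import Mathlib

section
/- A random variable T with values in [0, ∞] is a stopping time of the single jump filtration 𝔽 (i.e. {T ≤ t} ∈ 𝒻_t for all t ∈ ℝ₊) if and only if it satisfies the following property: if the set {T < γ} is nonempty, then there exists a real number r such that {T < γ} = {T = r < γ} = {r < γ}. -/
/-!
On `{γ > t}` the σ-field `𝒻_t` is trivial, so `{T ≤ t}` either contains all of `{γ > t}` or
misses it. Taking `t = T ω` for a point with `T ω < γ ω` shows that every other point `ω'` with
`T ω < γ ω'` satisfies `T ω' ≤ T ω`; by symmetry `T` takes a single value `r` on `{T < γ}`,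
and the same argument at `t = r` gives `{r < γ} ⊆ {T < γ}`. Conversely, that description of
`{T < γ}` decides `{T ≤ t} ∩ {γ > t}` according to whether `r ≤ t`.
-/

open MeasureTheory Filter Set Topology
open scoped ENNReal NNReal Classical

noncomputable section

namespace SingleJump

variable {Ω : Type*}

/-- The event `{γ > t}`. -/
def jumpSet (γ : Ω → ℝ≥0∞) (t : ℝ≥0) : Set Ω := {ω | (t : ℝ≥0∞) < γ ω}

/-- The collection `𝒻_t` of the single jump filtration generated by `γ` and the σ-field `m`:
`A ∈ 𝒻_t` iff `A` is `m`-measurable and `A ∩ {γ > t}` is either `∅` or `{γ > t}`. -/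
def jumpColl (m : MeasurableSpace Ω) (γ : Ω → ℝ≥0∞) (t : ℝ≥0) : Set (Set Ω) :=
  {A | MeasurableSet[m] A ∧ (A ∩ jumpSet γ t = ∅ ∨ A ∩ jumpSet γ t = jumpSet γ t)}

/-- `𝒻_t` as a σ-field (the collection `jumpColl` generates itself, see Proposition 1(i)). -/
def jumpσ (m : MeasurableSpace Ω) (γ : Ω → ℝ≥0∞) (t : ℝ≥0) : MeasurableSpace Ω :=
  MeasurableSpace.generateFrom (jumpColl m γ t)

/-- `𝒻_∞ = σ(⋃_{t ∈ ℝ₊} 𝒻_t)`. -/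
def jumpσInf (m : MeasurableSpace Ω) (γ : Ω → ℝ≥0∞) : MeasurableSpace Ω :=
  ⨆ t : ℝ≥0, jumpσ m γ t

/-- A real function on `ℝ≥0` is càdlàg: right-continuous everywhere, finite left limits. -/
def Cadlag (f : ℝ≥0 → ℝ) : Prop :=
  (∀ t, ContinuousWithinAt f (Ici t) t) ∧
    ∀ t : ℝ≥0, 0 < t → ∃ c : ℝ, Tendsto f (𝓝[<] t) (𝓝 c)

/-- The filter of times `t ∈ ℝ≥0` with `t ↑ a` strictly from the left (this is `atTop`
when `a = ∞`). -/
def leftF (a : ℝ≥0∞) : Filter ℝ≥0 := Filter.comap (fun t : ℝ≥0 => (t : ℝ≥0∞)) (𝓝[<] a)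

/-- Total variation of `f` over `[0,∞)`, including `|f 0|` (the paper's convention `Var`). -/
def totalVar (f : ℝ≥0 → ℝ) : ℝ≥0∞ := (‖f 0‖₊ : ℝ≥0∞) + eVariationOn f Set.univ

/-- The process `M` stopped at the (possibly infinite) random time `T`. -/
def stopped (M : ℝ≥0 → Ω → ℝ) (T : Ω → ℝ≥0∞) : ℝ≥0 → Ω → ℝ :=
  fun t ω => M (((t : ℝ≥0∞) ⊓ T ω).toNNReal) ω

section WithMeasurableSpace

variable [m : MeasurableSpace Ω]

/-- `Ḡ(t) = 1 - G(t) = P(γ > t)`. -/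
def Gbar (μ : Measure Ω) (γ : Ω → ℝ≥0∞) (t : ℝ≥0) : ℝ :=
  (μ {ω | (t : ℝ≥0∞) < γ ω}).toReal

/-- `Ḡ(t-) = P(γ ≥ t)`, the left-hand limit of `Ḡ` at `t`. -/
def GbarLeft (μ : Measure Ω) (γ : Ω → ℝ≥0∞) (t : ℝ≥0) : ℝ :=
  (μ {ω | (t : ℝ≥0∞) ≤ γ ω}).toReal

/-- `t_G = sup {t ∈ ℝ₊ : G(t) < 1}`, the right endpoint of the law of `γ`. -/
def tG (μ : Measure Ω) (γ : Ω → ℝ≥0∞) : ℝ≥0∞ :=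
  sSup ((fun t : ℝ≥0 => (t : ℝ≥0∞)) '' {t : ℝ≥0 | μ {ω | γ ω ≤ (t : ℝ≥0∞)} < 1})

/-- `𝒯 = {t ∈ ℝ₊ : P(γ ≥ t) > 0}`. -/
def TT (μ : Measure Ω) (γ : Ω → ℝ≥0∞) : Set ℝ≥0 :=
  {t | 0 < μ {ω | (t : ℝ≥0∞) ≤ γ ω}}

/-- Case A: `P(γ = t_G < ∞) = 0`. -/
def CaseA (μ : Measure Ω) (γ : Ω → ℝ≥0∞) : Prop :=
  μ {ω | γ ω = tG μ γ ∧ tG μ γ < ⊤} = 0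

/-- Case B: `P(γ = t_G < ∞) > 0`. -/
def CaseB (μ : Measure Ω) (γ : Ω → ℝ≥0∞) : Prop :=
  0 < μ {ω | γ ω = tG μ γ ∧ tG μ γ < ⊤}

/-- `z ∈ L¹_loc(dG)` : `z` is Borel and `∫_{[0,t]} |z(s)| dG(s) < ∞` for every `t ∈ 𝒯`,
where `dG` is the law of `γ` (a measure on `[0,∞]`). -/
def MemL1loc (μ : Measure Ω) (γ : Ω → ℝ≥0∞) (z : ℝ≥0 → ℝ) : Prop :=
  Measurable z ∧ ∀ t ∈ TT μ γ,
    IntegrableOn (fun x : ℝ≥0∞ => z x.toNNReal) (Icc 0 (t : ℝ≥0∞)) (μ.map γ)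

/-- `F loc≪ G` with density `z = dF/dG` : `F(t) = F(0) + ∫_(0,t] z(s) dG(s)` for `t < t_G`. -/
def LocAC (μ : Measure Ω) (γ : Ω → ℝ≥0∞) (F z : ℝ≥0 → ℝ) : Prop :=
  MemL1loc μ γ z ∧ ∀ t : ℝ≥0, (t : ℝ≥0∞) < tG μ γ →
    F t = F 0 + ∫ x in Ioc (0 : ℝ≥0∞) (t : ℝ≥0∞), z x.toNNReal ∂(μ.map γ)

/-- Condition M for the pair `(F, H)`. -/
def CondM (μ : Measure Ω) (γ : Ω → ℝ≥0∞) (F H : ℝ≥0 → ℝ) : Prop :=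
  (∃ z, LocAC μ γ F z) ∧ MemL1loc μ γ H ∧
  (∀ t : ℝ≥0, (t : ℝ≥0∞) < tG μ γ →
    F t * Gbar μ γ t + ∫ x in Ioc (0 : ℝ≥0∞) (t : ℝ≥0∞), H x.toNNReal ∂(μ.map γ)
      = F 0 * Gbar μ γ 0) ∧
  (CaseB μ γ → Tendsto F (leftF (tG μ γ)) (𝓝 (H (tG μ γ).toNNReal)))

/-- A stopping time of the single jump filtration: `{T ≤ t} ∈ 𝒻_t` for all `t ∈ ℝ₊`. -/
def IsSJStoppingTime (γ : Ω → ℝ≥0∞) (T : Ω → ℝ≥0∞) : Prop :=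
  ∀ t : ℝ≥0, {ω | T ω ≤ (t : ℝ≥0∞)} ∈ jumpColl m γ t

/-- The martingale property on a set `S` of times, w.r.t. the single jump filtration. -/
def MartingaleOn (μ : Measure Ω) (γ : Ω → ℝ≥0∞) (M : ℝ≥0 → Ω → ℝ) (S : Set ℝ≥0) : Prop :=
  (∀ t ∈ S, Measurable[jumpσ m γ t] (M t)) ∧ (∀ t ∈ S, Integrable (M t) μ) ∧
    ∀ s ∈ S, ∀ t ∈ S, s ≤ t → μ[M t|jumpσ m γ s] =ᵐ[μ] M s

/-- A uniformly integrable martingale w.r.t. the single jump filtration. -/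
def UIMartingale (μ : Measure Ω) (γ : Ω → ℝ≥0∞) (M : ℝ≥0 → Ω → ℝ) : Prop :=
  MartingaleOn μ γ M Set.univ ∧ UniformIntegrable M 1 μ

/-- A local martingale w.r.t. the single jump filtration: adapted, a.s. càdlàg paths, and
there are stopping times `T n ↑ ∞` a.s. with each stopped process a UI martingale. -/
def LocalMartingale (μ : Measure Ω) (γ : Ω → ℝ≥0∞) (M : ℝ≥0 → Ω → ℝ) : Prop :=
  (∀ t : ℝ≥0, Measurable[jumpσ m γ t] (M t)) ∧
  (∀ᵐ ω ∂μ, Cadlag fun t => M t ω) ∧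
  ∃ T : ℕ → Ω → ℝ≥0∞,
    (∀ n, IsSJStoppingTime γ (T n)) ∧
    (∀ᵐ ω ∂μ, Monotone (fun n => T n ω) ∧ Tendsto (fun n => T n ω) atTop (𝓝 (⊤ : ℝ≥0∞))) ∧
    ∀ n, UIMartingale μ γ (stopped M (T n))

/-- `E[L' | γ] = 0` for a (possibly only locally integrable) random variable `L'`. -/
def CondZeroGivenGamma (μ : Measure Ω) (γ : Ω → ℝ≥0∞) (L' : Ω → ℝ) : Prop :=
  ∀ B : Set ℝ≥0∞, MeasurableSet B → IntegrableOn L' (γ ⁻¹' B) μ →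
    ∫ ω in γ ⁻¹' B, L' ω ∂μ = 0

lemma mem_jumpColl_iff {γ : Ω → ℝ≥0∞} {t : ℝ≥0} {A : Set Ω} :
    A ∈ jumpColl m γ t ↔ MeasurableSet A ∧ ((A ∩ jumpSet γ t).Nonempty → jumpSet γ t ⊆ A) := by
  simp only [jumpColl, Set.mem_ofPred_eq, Set.inter_eq_right, ← Set.not_nonempty_iff_eq_empty,
    imp_iff_not_or]

lemma isSJStoppingTime_iff {γ T : Ω → ℝ≥0∞} :
    IsSJStoppingTime γ T ↔ ∀ t : ℝ≥0, MeasurableSet {ω | T ω ≤ t} ∧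
      ∀ ω ω', T ω ≤ t → (t : ℝ≥0∞) < γ ω → (t : ℝ≥0∞) < γ ω' → T ω' ≤ t := by
  refine forall_congr' fun t => mem_jumpColl_iff.trans (and_congr_right fun _ => ?_)
  exact ⟨fun h ω ω' hT hγ hγ' => h ⟨ω, hT, hγ⟩ hγ', fun h ⟨ω, hT, hγ⟩ ω' hγ' => h ω ω' hT hγ hγ'⟩

namespace IsSJStoppingTime

variable {γ T : Ω → ℝ≥0∞}

lemma le_of_le_of_lt (hT : IsSJStoppingTime γ T) {t : ℝ≥0} {ω ω' : Ω}
    (hωt : T ω ≤ t) (htω : (t : ℝ≥0∞) < γ ω) (htω' : (t : ℝ≥0∞) < γ ω') : T ω' ≤ t :=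
  (isSJStoppingTime_iff.mp hT t).2 ω ω' hωt htω htω'

lemma le_of_lt_of_lt (hT : IsSJStoppingTime γ T) {ω ω' : Ω}
    (hω : T ω < γ ω) (hω' : T ω' < γ ω') : T ω' ≤ T ω := by
  by_contra! hlt
  obtain ⟨t, ht⟩ : ∃ t : ℝ≥0, T ω = t := ⟨_, (ENNReal.coe_toNNReal hω.ne_top).symm⟩
  rw [ht] at hω hlt
  exact hlt.not_ge (hT.le_of_le_of_lt ht.le hω (hlt.trans hω'))

lemma eq_of_lt_of_lt (hT : IsSJStoppingTime γ T) {ω ω' : Ω}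
    (hω : T ω < γ ω) (hω' : T ω' < γ ω') : T ω = T ω' :=
  le_antisymm (hT.le_of_lt_of_lt hω' hω) (hT.le_of_lt_of_lt hω hω')

end IsSJStoppingTime

theorem stmt_3_general (γ : Ω → ℝ≥0∞)
    (T : Ω → ℝ≥0∞) (hT : Measurable T) :
    IsSJStoppingTime γ T ↔
      ({ω | T ω < γ ω}.Nonempty →
        ∃ r : ℝ≥0,
          {ω | T ω < γ ω} = {ω | T ω = (r : ℝ≥0∞) ∧ (r : ℝ≥0∞) < γ ω} ∧
          {ω | T ω < γ ω} = {ω | (r : ℝ≥0∞) < γ ω}) := by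
  constructor
  · rintro hst ⟨ω₀, h₀ : T ω₀ < γ ω₀⟩
    obtain ⟨r, hr⟩ : ∃ r : ℝ≥0, T ω₀ = r := ⟨_, (ENNReal.coe_toNNReal h₀.ne_top).symm⟩
    have hT_eq : ∀ {ω}, T ω < γ ω → T ω = r := fun hω => hr ▸ hst.eq_of_lt_of_lt hω h₀
    refine ⟨r, Set.ext fun ω => ⟨fun hω => ⟨hT_eq hω, hT_eq hω ▸ hω⟩, fun ⟨hωr, hrω⟩ => ?_⟩,
      Set.ext fun ω => ⟨fun hω => hT_eq hω ▸ hω, fun hrω => ?_⟩⟩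
    · exact (hωr ▸ hrω : T ω < γ ω)
    · exact (hst.le_of_le_of_lt hr.le (hr ▸ h₀) hrω).trans_lt hrω
  · refine fun h => isSJStoppingTime_iff.mpr fun t => ⟨hT measurableSet_Iic, ?_⟩
    intro ω ω' hωt htω htω'
    obtain ⟨r, hlt_eq, hlt_iff⟩ := h ⟨ω, hωt.trans_lt htω⟩
    have hT_eq : ∀ {ω}, T ω < γ ω → T ω = r := fun hlt => (hlt_eq.subset hlt).1
    have hrt : (r : ℝ≥0∞) ≤ t := hT_eq (hωt.trans_lt htω) ▸ hωt
    have hω' : T ω' < γ ω' := hlt_iff.superset (hrt.trans_lt htω')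
    exact (hT_eq hω').trans_le hrt

/-- **Proposition 1 (iv).** A random variable `T` with values in `[0,∞]` is a stopping time
of the single jump filtration iff: whenever `{T < γ}` is nonempty, there is a number `r`
with `{T < γ} = {T = r < γ} = {r < γ}`. -/
theorem stmt_3 (μ : Measure Ω) [IsProbabilityMeasure μ] (γ : Ω → ℝ≥0∞)
    (hγ : Measurable γ) (hpos : 0 < μ {ω | 0 < γ ω})
    (T : Ω → ℝ≥0∞) (hT : Measurable T) :
    IsSJStoppingTime γ T ↔
      ({ω | T ω < γ ω}.Nonempty →
        ∃ r : ℝ≥0,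
          {ω | T ω < γ ω} = {ω | T ω = (r : ℝ≥0∞) ∧ (r : ℝ≥0∞) < γ ω} ∧
          {ω | T ω < γ ω} = {ω | (r : ℝ≥0∞) < γ ω}) :=
  stmt_3_general γ T hT

end WithMeasurableSpace

end SingleJump
end
end

section
/- Let X = (X_t)_{t ∈ ℝ₊} be an 𝔽-adapted process almost all of whose paths are càdlàg and of finite variation on every compact interval, and let F(t), 0 ≤ t < t_G, be the deterministic function with X_t = F(t) on {t < γ ∧ t_G}. Then F has finite total variation over [0, t] for every t < t_G in Case A, and finite total variation over the whole interval [0, t_G) in Case B. -/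
open MeasureTheory Filter Set Topology
open scoped ENNReal NNReal Classical

noncomputable section

namespace SingleJump

variable {Ω : Type*}

section WithMeasurableSpace

variable [m : MeasurableSpace Ω]

lemma measure_jumpSet_pos_of_lt_tG {μ : Measure Ω} [IsProbabilityMeasure μ] {γ : Ω → ℝ≥0∞}
    {t : ℝ≥0} (ht : (t : ℝ≥0∞) < tG μ γ) : 0 < μ (jumpSet γ t) := by
  obtain ⟨_, ⟨t', ht', rfl⟩, htt'⟩ := lt_sSup_iff.mp ht
  set S := {ω | γ ω ≤ (t' : ℝ≥0∞)}
  have hSc : 0 < μ Sᶜ := by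
    by_contra! h
    have : μ univ ≤ μ S + μ Sᶜ := union_compl_self S ▸ measure_union_le S Sᶜ
    simp only [measure_univ, nonpos_iff_eq_zero.mp h, add_zero] at this
    exact ht'.not_ge this
  exact hSc.trans_le <| measure_mono fun ω hω => htt'.trans (not_le.mp hω)

lemma eVariationOn_lt_top_of_eqOn {α E : Type*} [LinearOrder α] [PseudoEMetricSpace E]
    {f g : α → E} {s t : Set α} (hst : s ⊆ t) (hfg : EqOn f g s)
    (hg : eVariationOn g t < ⊤) : eVariationOn f s < ⊤ := by
  rw [eVariationOn.eq_of_eqOn hfg]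
  exact (eVariationOn.mono g hst).trans_lt hg

theorem stmt_5_general (μ : Measure Ω) [IsProbabilityMeasure μ] (γ : Ω → ℝ≥0∞)
    (X : ℝ≥0 → Ω → ℝ)
    (hpaths : ∀ᵐ ω ∂μ, Cadlag (fun t => X t ω) ∧
      ∀ t : ℝ≥0, eVariationOn (fun s => X s ω) (Icc 0 t) < ⊤)
    (F : ℝ≥0 → ℝ)
    (hF : ∀ t : ℝ≥0, (t : ℝ≥0∞) < tG μ γ → ∀ ω, (t : ℝ≥0∞) < γ ω → X t ω = F t) :
    (CaseA μ γ → ∀ t : ℝ≥0, (t : ℝ≥0∞) < tG μ γ → eVariationOn F (Icc 0 t) < ⊤) ∧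
    (CaseB μ γ → eVariationOn F {s : ℝ≥0 | (s : ℝ≥0∞) < tG μ γ} < ⊤) := by
  -- `F` is a path of `X` before the jump, so pick one path with `γ` beyond the time horizon.
  constructor
  · intro _ t ht
    obtain ⟨ω, hωt, hω⟩ := Measure.exists_mem_of_measure_ne_zero_of_ae
      (measure_jumpSet_pos_of_lt_tG ht).ne' (ae_restrict_of_ae hpaths)
    refine eVariationOn_lt_top_of_eqOn subset_rfl (fun s hs => ?_) (hω.2 t)
    have hst : (s : ℝ≥0∞) ≤ t := ENNReal.coe_le_coe.mpr hs.2
    exact (hF s (hst.trans_lt ht) ω (hst.trans_lt hωt)).symm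
  · intro hB
    obtain ⟨ω, ⟨hγω, htG⟩, hω⟩ :=
      Measure.exists_mem_of_measure_ne_zero_of_ae hB.ne' (ae_restrict_of_ae hpaths)
    refine eVariationOn_lt_top_of_eqOn (fun s hs => ?_) (fun s hs => (hF s hs ω (hγω ▸ hs)).symm)
      (hω.2 (tG μ γ).toNNReal)
    exact ⟨zero_le, ENNReal.le_toNNReal_of_coe_le (le_of_lt hs) htG.ne⟩

/-- **Proposition 2 (iii).** If `X` is an adapted process with a.s. càdlàg paths of finite
variation on compacts, and `F` is the deterministic function with `X_t = F(t)` on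
`{t < γ ∧ t_G}`, then `F` has finite variation over `[0,t]` for every `t < t_G` in Case A,
and over `[0, t_G)` in Case B. -/
theorem stmt_5 (μ : Measure Ω) [IsProbabilityMeasure μ] (γ : Ω → ℝ≥0∞)
    (hγ : Measurable γ) (hpos : 0 < μ {ω | 0 < γ ω})
    (X : ℝ≥0 → Ω → ℝ) (hX : ∀ t : ℝ≥0, Measurable[jumpσ m γ t] (X t))
    (hpaths : ∀ᵐ ω ∂μ, Cadlag (fun t => X t ω) ∧
      ∀ t : ℝ≥0, eVariationOn (fun s => X s ω) (Icc 0 t) < ⊤)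
    (F : ℝ≥0 → ℝ)
    (hF : ∀ t : ℝ≥0, (t : ℝ≥0∞) < tG μ γ → ∀ ω, (t : ℝ≥0∞) < γ ω → X t ω = F t) :
    (CaseA μ γ → ∀ t : ℝ≥0, (t : ℝ≥0∞) < tG μ γ → eVariationOn F (Icc 0 t) < ⊤) ∧
    (CaseB μ γ → eVariationOn F {s : ℝ≥0 | (s : ℝ≥0∞) < tG μ γ} < ⊤) :=
  stmt_5_general μ γ X hpaths F hF

end WithMeasurableSpace

end SingleJump
end
end

section
/- Let H be any function with H : 𝒯 → ℝ and H ∈ L¹_loc(dG). Define F(t) = Ḡ(t)⁻¹·[F(0)Ḡ(0) − ∫_{(0,t]} H(s) dG(s)] for 0 < t < t_G, where F(0) is an arbitrary real number in Case A, while in Case B F(0) = Ḡ(0)⁻¹·∫_{(0,t_G]} H(s) dG(s). Then the pair (F, H) satisfies Condition M. Conversely, if F is any function such that the pair (F, H) satisfies Condition M, then F(t) = Ḡ(t)⁻¹·[F(0)Ḡ(0) − ∫_{(0,t]} H(s) dG(s)] for all 0 < t < t_G and, in Case B, F(0) = Ḡ(0)⁻¹·∫_{(0,t_G]} H(s) dG(s).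 -/
open MeasureTheory Filter Set Topology
open scoped ENNReal NNReal Classical

noncomputable section

/-!
On `[0, t_G)` we have `Ḡ > 0`, so the explicit formula for `F` is the third clause of
Condition M, `F(t) Ḡ(t) + ∫_(0,t] H dG = F(0) Ḡ(0)`, solved for `F(t)`. What remains is that
every solution satisfies `F loc≪ G`, and the behaviour of `F` at `t_G` in Case B.

Where `Ḡ ≥ q > 0`, `F = (F(0) Ḡ(0) − ∫_(0,·] H dG) / Ḡ` is a product of bounded functions whose
increments over `(a, b]` are dominated by `ρ(a, b]` for finite measures `ρ ≪ dG`. Then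
`ρ(0, ·] ± F` are monotone and right-continuous, and Radon–Nikodym derivatives of their
Stieltjes measures give a density of `F`. In Case B this works on all of `[0, t_G)` with
`q = P(γ = t_G)`; in Case A the densities over `[0, e_n]`, `e_n ↑ t_G`, are glued together.

In Case B, as `t ↑ t_G`, `Ḡ(t) → P(γ = t_G) > 0` and `∫_(0,t] H dG → ∫_(0,t_G) H dG`, so `F(t)`
tends to `(F(0) Ḡ(0) − ∫_(0,t_G) H dG) / P(γ = t_G)`, which is `H(t_G)` exactly when
`F(0) Ḡ(0) = ∫_(0,t_G] H dG`.
-/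

section OrderedMeasureSpace

variable {α : Type*} [LinearOrder α] [TopologicalSpace α] [MeasurableSpace α]

lemma measureReal_Iic_sub_measureReal_Iic [OrderClosedTopology α] [OpensMeasurableSpace α]
    (ρ : Measure α) [IsFiniteMeasure ρ] {a b : α} (hab : a ≤ b) :
    ρ.real (Iic b) - ρ.real (Iic a) = ρ.real (Ioc a b) := by
  rw [← Iic_sdiff_Iic, measureReal_sdiff (Iic_subset_Iic.2 hab) measurableSet_Iic]

lemma setIntegral_Ioc_eq_setIntegral_Ioo_add [OrderClosedTopology α] [OpensMeasurableSpace α]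
    [MeasurableSingletonClass α] {ν : Measure α} {c a : α} (hca : c < a) {f : α → ℝ}
    (hf : IntegrableOn f (Ioc c a) ν) :
    ∫ x in Ioc c a, f x ∂ν = ∫ x in Ioo c a, f x ∂ν + ν.real {a} * f a := by
  rw [← Ioo_union_right hca, setIntegral_union (disjoint_singleton_right.2 fun h => h.2.false)
    (measurableSet_singleton a) (hf.mono_set Ioo_subset_Ioc_self)
    (hf.mono_set (singleton_subset_iff.2 (right_mem_Ioc.2 hca))), integral_singleton, smul_eq_mul]

variable [OrderTopology α] [DenselyOrdered α] [FirstCountableTopology α] [OpensMeasurableSpace α]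

lemma continuousWithinAt_measureReal_Iic (ρ : Measure α) [IsFiniteMeasure ρ] (x : α) :
    ContinuousWithinAt (fun y => ρ.real (Iic y)) (Ici x) x := by
  rw [← continuousWithinAt_Ioi_iff_Ici]
  rcases isTop_or_exists_gt x with hx | ⟨c, hc⟩
  · rw [hx.isMax.Ioi_eq]
    simp [ContinuousWithinAt]
  have hInter : ⋂ r > x, Iic r = Iic x := by
    refine Subset.antisymm (fun y hy => ?_) fun y hy => mem_iInter₂.2 fun r hr => hy.trans hr.le
    refine not_lt.1 fun hxy => ?_
    obtain ⟨r, hxr, hry⟩ := exists_between hxy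
    exact (mem_iInter₂.1 hy r hxr).not_gt hry
  have := tendsto_measure_biInter_gt (μ := ρ) (fun r _ => measurableSet_Iic.nullMeasurableSet)
    (fun _ _ _ hij => Iic_subset_Iic.2 hij) ⟨c, hc, measure_ne_top ρ _⟩
  rw [hInter] at this
  exact (ENNReal.tendsto_toReal (measure_ne_top ρ _)).comp this

lemma tendsto_setIntegral_Ioc_nhdsLT {ν : Measure α} {c a : α} {f : α → ℝ}
    (hf : IntegrableOn f (Ioo c a) ν) :
    Tendsto (fun x => ∫ y in Ioc c x, f y ∂ν) (𝓝[<] a) (𝓝 (∫ y in Ioo c a, f y ∂ν)) := by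
  have : (atTop : Filter (Iio a)).IsCountablyGenerated := by
    rw [← comap_coe_Iio_nhdsLT]; infer_instance
  have hU : ⋃ x : Iio a, Ioc c (x : α) = Ioo c a := by
    ext y
    simp only [mem_iUnion, mem_Ioc, mem_Ioo, Subtype.exists, mem_Iio, exists_prop]
    exact ⟨fun ⟨x, hxa, hcy, hyx⟩ => ⟨hcy, hyx.trans_lt hxa⟩,
      fun ⟨hcy, hya⟩ => ⟨y, hya, hcy, le_rfl⟩⟩
  rw [← tendsto_comp_coe_Iio_atTop, ← hU]
  exact tendsto_setIntegral_of_monotone (fun _ => measurableSet_Ioc)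
    (fun x y hxy => Ioc_subset_Ioc_right (Subtype.mono_coe _ hxy)) (hU ▸ hf)

lemma tendsto_measureReal_Ioi_nhdsLT (ν : Measure α) [IsFiniteMeasure ν] (a : α) :
    Tendsto (fun x => ν.real (Ioi x)) (𝓝[<] a) (𝓝 (ν.real (Ici a))) := by
  have : (atTop : Filter (Iio a)).IsCountablyGenerated := by
    rw [← comap_coe_Iio_nhdsLT]; infer_instance
  have hU : ⋃ x : Iio a, Iic (x : α) = Iio a := by
    ext y
    simp only [mem_iUnion, mem_Iic, Subtype.exists, mem_Iio, exists_prop]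
    exact ⟨fun ⟨x, hxa, hyx⟩ => hyx.trans_lt hxa, fun hya => ⟨y, hya, le_rfl⟩⟩
  have := tendsto_measure_iUnion_atTop (μ := ν) (s := fun x : Iio a => Iic (x : α))
    fun x y hxy => Iic_subset_Iic.2 hxy
  rw [hU] at this
  rw [← tendsto_comp_coe_Iio_atTop]
  simp_rw [← compl_Iic, ← compl_Iio, measureReal_compl measurableSet_Iic,
    measureReal_compl measurableSet_Iio]
  exact tendsto_const_nhds.sub ((ENNReal.tendsto_toReal (measure_ne_top _ _)).comp this)

end OrderedMeasureSpace

lemma lipschitzWith_inv_max {q : ℝ≥0} (hq : 0 < q) :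
    LipschitzWith (q⁻¹ ^ 2) fun y : ℝ => (max y q)⁻¹ := by
  refine LipschitzWith.of_dist_le_mul fun x y => ?_
  have hq' : (0 : ℝ) < q := hq
  have hx : (q : ℝ) ≤ max x q := le_max_right _ _
  have hy : (q : ℝ) ≤ max y q := le_max_right _ _
  rw [Real.dist_eq, Real.dist_eq, inv_sub_inv (hq'.trans_le hx).ne' (hq'.trans_le hy).ne', abs_div,
    abs_of_pos (mul_pos (hq'.trans_le hx) (hq'.trans_le hy)), div_le_iff₀ (by positivity)]
  calc |max y q - max x q| ≤ |x - y| := by rw [abs_sub_comm]; exact abs_max_sub_max_le_abs x y q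
    _ = (q⁻¹ ^ 2 : ℝ≥0) * |x - y| * (q * q) := by push_cast; field_simp
    _ ≤ (q⁻¹ ^ 2 : ℝ≥0) * |x - y| * (max x q * max y q) := by gcongr

section DominatedIncrements

variable {α : Type*} [LinearOrder α] [MeasurableSpace α]

/-- The Lebesgue–Stieltjes measure of `f` exists and is absolutely continuous w.r.t. `ν`,
phrased without signed measures. -/
def HasDominatedIncrements (ν : Measure α) (f : α → ℝ) : Prop :=
  ∃ ρ : Measure α, IsFiniteMeasure ρ ∧ ρ ≪ ν ∧ ∀ a b, a ≤ b → |f b - f a| ≤ ρ.real (Ioc a b)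

variable {ν : Measure α} {f g : α → ℝ}

lemma HasDominatedIncrements.const_sub (hf : HasDominatedIncrements ν f) (c : ℝ) :
    HasDominatedIncrements ν fun x => c - f x := by
  obtain ⟨ρ, hρ, hρν, hinc⟩ := hf
  refine ⟨ρ, hρ, hρν, fun a b hab => ?_⟩
  rw [sub_sub_sub_cancel_left, abs_sub_comm]
  exact hinc a b hab

lemma HasDominatedIncrements.comp_lipschitzWith (hf : HasDominatedIncrements ν f) {φ : ℝ → ℝ}
    {K : ℝ≥0} (hφ : LipschitzWith K φ) : HasDominatedIncrements ν (φ ∘ f) := by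
  obtain ⟨ρ, hρ, hρν, hinc⟩ := hf
  refine ⟨K • ρ, inferInstance, hρν.smul_left K, fun a b hab => ?_⟩
  rw [measureReal_nnreal_smul_apply]
  calc |φ (f b) - φ (f a)| ≤ K * |f b - f a| := by
        simpa only [Real.dist_eq] using hφ.dist_le_mul (f b) (f a)
    _ ≤ K * ρ.real (Ioc a b) := by gcongr; exact hinc a b hab

lemma HasDominatedIncrements.mul (hf : HasDominatedIncrements ν f)
    (hg : HasDominatedIncrements ν g) {A B : ℝ≥0} (hfA : ∀ x, |f x| ≤ A) (hgB : ∀ x, |g x| ≤ B) :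
    HasDominatedIncrements ν (f * g) := by
  obtain ⟨ρ, hρ, hρν, hfinc⟩ := hf
  obtain ⟨σ, hσ, hσν, hginc⟩ := hg
  refine ⟨A • σ + B • ρ, inferInstance, (hσν.smul_left A).add_left (hρν.smul_left B),
    fun a b hab => ?_⟩
  rw [measureReal_add_apply, measureReal_nnreal_smul_apply, measureReal_nnreal_smul_apply]
  calc |(f * g) b - (f * g) a| = |f b * (g b - g a) + g a * (f b - f a)| := by
        rw [Pi.mul_apply, Pi.mul_apply]; ring_nf
    _ ≤ |f b| * |g b - g a| + |g a| * |f b - f a| := by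
        rw [← abs_mul, ← abs_mul]; exact abs_add_le _ _
    _ ≤ A * σ.real (Ioc a b) + B * ρ.real (Ioc a b) := by
        gcongr
        exacts [hfA b, hginc a b hab, hgB a, hfinc a b hab]

variable [TopologicalSpace α] [OrderClosedTopology α] [OpensMeasurableSpace α]

lemma hasDominatedIncrements_measureReal_Ioi [IsFiniteMeasure ν] :
    HasDominatedIncrements ν fun x => ν.real (Ioi x) := by
  refine ⟨ν, inferInstance, Measure.AbsolutelyContinuous.rfl, fun a b hab => ?_⟩
  rw [abs_sub_comm, ← measureReal_sdiff (Ioi_subset_Ioi hab) measurableSet_Ioi, Ioi_sdiff_Ioi,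
    abs_of_nonneg measureReal_nonneg]

lemma hasDominatedIncrements_setIntegral_Iic {k : α → ℝ} (hk : Integrable k ν) :
    HasDominatedIncrements ν fun x => ∫ y in Iic x, k y ∂ν := by
  refine ⟨ν.withDensity fun y => ENNReal.ofReal |k y|, isFiniteMeasure_withDensity_ofReal hk.abs.2,
    withDensity_absolutelyContinuous _ _, fun a b hab => ?_⟩
  have hsplit : ∫ y in Iic b, k y ∂ν = (∫ y in Iic a, k y ∂ν) + ∫ y in Ioc a b, k y ∂ν := by
    rw [← setIntegral_union (Iic_disjoint_Ioc le_rfl) measurableSet_Ioc hk.integrableOn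
      hk.integrableOn, Iic_union_Ioc_eq_Iic hab]
  beta_reduce
  rw [hsplit, add_sub_cancel_left, measureReal_def, withDensity_apply _ measurableSet_Ioc,
    ← integral_eq_lintegral_of_nonneg_ae (ae_of_all _ fun _ => abs_nonneg _)
      hk.abs.aestronglyMeasurable.restrict]
  exact abs_integral_le_integral_abs

end DominatedIncrements

section DensityOfDominatedIncrements

variable {α : Type*} [LinearOrder α] [TopologicalSpace α] [OrderTopology α] [DenselyOrdered α]
  [SecondCountableTopology α] [MeasurableSpace α] [BorelSpace α] {ν : Measure α} {f : α → ℝ}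

lemma exists_stieltjesFunction_eq_measureReal_Iic_add {ρ : Measure α} [IsFiniteMeasure ρ]
    (hf : ∀ a b, a ≤ b → |f b - f a| ≤ ρ.real (Ioc a b)) :
    ∃ g : StieltjesFunction α, ∀ x, g x = ρ.real (Iic x) + f x := by
  have hmono : Monotone fun x => ρ.real (Iic x) + f x := fun a b hab => by
    have := measureReal_Iic_sub_measureReal_Iic ρ hab
    linarith [neg_abs_le (f b - f a), hf a b hab]
  have hfrc (x : α) : ContinuousWithinAt f (Ici x) x := by
    have hD := (continuousWithinAt_measureReal_Iic ρ x).tendsto.sub_const (ρ.real (Iic x))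
    rw [sub_self] at hD
    rw [ContinuousWithinAt, tendsto_iff_dist_tendsto_zero]
    refine squeeze_zero' (Eventually.of_forall fun _ => dist_nonneg) ?_ hD
    filter_upwards [self_mem_nhdsWithin] with y hy
    rw [Real.dist_eq, measureReal_Iic_sub_measureReal_Iic ρ hy]
    exact hf x y hy
  exact ⟨⟨_, hmono, fun x => (continuousWithinAt_measureReal_Iic ρ x).add (hfrc x)⟩, fun _ => rfl⟩

variable [OrderBot α] [CompactIccSpace α]

lemma StieltjesFunction.measure_Iic_of_orderBot (g : StieltjesFunction α) (x : α) :
    g.measure (Iic x) = ENNReal.ofReal (g x - g ⊥) := by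
  refine g.measure_Iic ?_ x
  rw [atBot_eq_pure_of_isBot isBot_bot]
  exact tendsto_pure_nhds _ _

theorem HasDominatedIncrements.exists_density [SigmaFinite ν] (hf : HasDominatedIncrements ν f) :
    ∃ z : α → ℝ, Measurable z ∧ Integrable z ν ∧
      ∀ a b, a ≤ b → f b - f a = ∫ x in Ioc a b, z x ∂ν := by
  obtain ⟨ρ, hρ, hρν, hinc⟩ := hf
  obtain ⟨g₁, hg₁⟩ := exists_stieltjesFunction_eq_measureReal_Iic_add hinc
  obtain ⟨g₂, hg₂⟩ := exists_stieltjesFunction_eq_measureReal_Iic_add (f := -f) fun a b hab => by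
    rw [Pi.neg_apply, Pi.neg_apply, neg_sub_neg, abs_sub_comm]
    exact hinc a b hab
  -- `g₁ + g₂ = 2 ρ(Iic ·)`, so the Stieltjes measure of `g₁` is dominated by `2 ρ`
  have hsum : (2 : ℝ≥0) • ρ.restrict (Ioi ⊥) = g₁.measure + g₂.measure := by
    refine Measure.ext_of_Iic _ _ fun x => ?_
    have hx := measureReal_Iic_sub_measureReal_Iic ρ (bot_le (a := x))
    have h2 : (g₁ x - g₁ ⊥) + (g₂ x - g₂ ⊥) = 2 * ρ.real (Ioc ⊥ x) := by
      rw [hg₁, hg₁, hg₂, hg₂, Pi.neg_apply, Pi.neg_apply]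
      linarith
    rw [Measure.add_apply, g₁.measure_Iic_of_orderBot, g₂.measure_Iic_of_orderBot,
      ← ENNReal.ofReal_add (sub_nonneg.2 (g₁.mono bot_le)) (sub_nonneg.2 (g₂.mono bot_le)), h2,
      ENNReal.ofReal_mul zero_le_two, ofReal_measureReal, Measure.smul_apply,
      Measure.restrict_apply measurableSet_Iic, Iic_inter_Ioi, ENNReal.ofReal_ofNat,
      ENNReal.smul_def]
    rfl
  have hle : g₁.measure ≤ (2 : ℝ≥0) • ρ.restrict (Ioi ⊥) := hsum ▸ Measure.le_add_right le_rfl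
  have hac : g₁.measure ≪ ν := ((Measure.absolutelyContinuous_of_le hle).trans
    ((Measure.absolutelyContinuous_of_le Measure.restrict_le_self).smul_left 2)).trans hρν
  have : IsFiniteMeasure g₁.measure := isFiniteMeasure_of_le _ hle
  refine ⟨fun x => (g₁.measure.rnDeriv ν x).toReal - (ρ.rnDeriv ν x).toReal, by fun_prop,
    Measure.integrable_toReal_rnDeriv.sub Measure.integrable_toReal_rnDeriv, fun a b hab => ?_⟩
  rw [integral_sub Measure.integrable_toReal_rnDeriv.integrableOn
    Measure.integrable_toReal_rnDeriv.integrableOn, Measure.setIntegral_toReal_rnDeriv hac,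
    Measure.setIntegral_toReal_rnDeriv hρν, measureReal_def, g₁.measure_Ioc,
    ENNReal.toReal_ofReal (sub_nonneg.2 (g₁.mono hab)), hg₁, hg₁,
    ← measureReal_Iic_sub_measureReal_Iic ρ hab]
  ring

end DensityOfDominatedIncrements

section Gluing

variable {α : Type*} [LinearOrder α] [TopologicalSpace α] [OrderClosedTopology α]
  [MeasurableSpace α] [OpensMeasurableSpace α]

lemma exists_measurable_eq_of_le_of_forall_lt {β : Type*} [MeasurableSpace β] {e : ℕ → α}
    {zs : ℕ → α → β} (hzs : ∀ n, Measurable (zs n)) :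
    ∃ z : α → β, Measurable z ∧ ∀ n x, x ≤ e n → (∀ m < n, e m < x) → z x = zs n x := by
  have hp (x : α) : ∃ n, x ∈ Iic (e n) ∪ ⋂ m, Ioi (e m) := by
    by_cases h : ∃ n, x ≤ e n
    · exact h.imp fun _ => Or.inl
    · exact ⟨0, Or.inr (mem_iInter.2 fun m => not_le.1 fun hm => h ⟨m, hm⟩)⟩
  refine ⟨fun x => zs (Nat.find (hp x)) x,
    Measurable.find (p := fun n x => x ∈ Iic (e n) ∪ ⋂ m, Ioi (e m)) hzs
      (fun _ => measurableSet_Iic.union (.iInter fun _ => measurableSet_Ioi)) hp,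
    fun n x hxn hx => ?_⟩
  have : Nat.find (hp x) = n := (Nat.find_eq_iff _).2 ⟨Or.inl hxn, fun m hm h =>
    h.elim (fun hxm => (hx m hm).not_ge hxm) fun h => (mem_iInter.1 h n).not_ge hxn⟩
  simp only [this]

theorem exists_density_of_monotone_exhaustion {ν : Measure α} {f : α → ℝ} {e : ℕ → α}
    (he : Monotone e)
    (hz : ∀ n, ∃ z : α → ℝ, Measurable z ∧ IntegrableOn z (Iic (e n)) ν ∧
      ∀ a b, a ≤ b → b ≤ e n → f b - f a = ∫ x in Ioc a b, z x ∂ν) :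
    ∃ z : α → ℝ, Measurable z ∧ (∀ n, IntegrableOn z (Iic (e n)) ν) ∧
      ∀ n a b, a ≤ b → b ≤ e n → f b - f a = ∫ x in Ioc a b, z x ∂ν := by
  choose zs hzm hzi hzd using hz
  obtain ⟨z, hz, hpiece⟩ := exists_measurable_eq_of_le_of_forall_lt (e := e) hzm
  have hlayer (n : ℕ) {a b : α} (ha : ∀ m < n, e m ≤ a) (hb : b ≤ e n) :
      EqOn z (zs n) (Ioc a b) := fun x hx =>
    hpiece n x (hx.2.trans hb) fun m hm => (ha m hm).trans_lt hx.1
  have hint (n : ℕ) : IntegrableOn z (Iic (e n)) ν := by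
    induction n with
    | zero => exact (hzi 0).congr_fun (fun x hx => (hpiece 0 x hx nofun).symm) measurableSet_Iic
    | succ n ih =>
      rw [← Iic_union_Ioc_eq_Iic (he n.le_succ)]
      exact ih.union (((hzi (n + 1)).mono_set Ioc_subset_Iic_self).congr_fun
        (hlayer (n + 1) (fun m hm => he (Nat.lt_succ_iff.1 hm)) le_rfl).symm measurableSet_Ioc)
  refine ⟨z, hz, hint, fun n => ?_⟩
  induction n with
  | zero =>
    intro a b hab hb
    rw [hzd 0 a b hab hb, setIntegral_congr_fun measurableSet_Ioc (hlayer 0 nofun hb)]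
  | succ n ih =>
    have hlast {a b : α} (ha : e n ≤ a) (hab : a ≤ b) (hb : b ≤ e (n + 1)) :
        f b - f a = ∫ x in Ioc a b, z x ∂ν := by
      rw [hzd (n + 1) a b hab hb, setIntegral_congr_fun measurableSet_Ioc
        (hlayer (n + 1) (fun m hm => (he (Nat.lt_succ_iff.1 hm)).trans ha) hb)]
    intro a b hab hb
    rcases le_total b (e n) with hbn | hnb
    · exact ih a b hab hbn
    rcases le_total (e n) a with hna | han
    · exact hlast hna hab hb
    rw [← sub_add_sub_cancel (f b) (f (e n)) (f a), add_comm, hlast le_rfl hnb hb,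
      ih a (e n) han le_rfl,
      ← setIntegral_union (Ioc_disjoint_Ioc_of_le le_rfl) measurableSet_Ioc
        ((hint (n + 1)).mono_set fun x hx => hx.2.trans (he n.le_succ))
        ((hint (n + 1)).mono_set fun x hx => hx.2.trans hb),
      Ioc_union_Ioc_eq_Ioc han hnb]

end Gluing

namespace SingleJump

lemma leftF_neBot {a : ℝ≥0∞} (ha : 0 < a) : (leftF a).NeBot := by
  have : (𝓝[<] a).NeBot := nhdsLT_neBot_of_exists_lt ⟨0, ha⟩
  refine this.comap_of_range_mem (mem_of_superset self_mem_nhdsWithin fun x hx => ?_)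
  exact ⟨x.toNNReal, ENNReal.coe_toNNReal (hx.trans_le le_top).ne⟩

lemma eventually_lt_leftF (a : ℝ≥0∞) : ∀ᶠ t : ℝ≥0 in leftF a, (t : ℝ≥0∞) < a :=
  preimage_mem_comap self_mem_nhdsWithin

variable {Ω : Type*}

section WithMeasurableSpace

variable [m : MeasurableSpace Ω] {μ : Measure Ω} {γ : Ω → ℝ≥0∞}

/-- The third clause of Condition M: `t ↦ E[F(t) 1{γ > t} + H(γ) 1{0 < γ ≤ t}]` is constant
on `[0, t_G)`. -/
def HasConstantMean (μ : Measure Ω) (γ : Ω → ℝ≥0∞) (F H : ℝ≥0 → ℝ) : Prop :=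
  ∀ t : ℝ≥0, (t : ℝ≥0∞) < tG μ γ →
    F t * Gbar μ γ t + ∫ x in Ioc (0 : ℝ≥0∞) (t : ℝ≥0∞), H x.toNNReal ∂(μ.map γ) = F 0 * Gbar μ γ 0

lemma gbar_eq_measureReal_Ioi (hγ : Measurable γ) (t : ℝ≥0) :
    Gbar μ γ t = (μ.map γ).real (Ioi (t : ℝ≥0∞)) := by
  rw [Gbar, measureReal_def, Measure.map_apply hγ measurableSet_Ioi]
  rfl

lemma mem_TT_iff (hγ : Measurable γ) {t : ℝ≥0} : t ∈ TT μ γ ↔ 0 < (μ.map γ) (Ici (t : ℝ≥0∞)) := by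
  rw [TT, mem_ofPred_eq, Measure.map_apply hγ measurableSet_Ici]
  rfl

lemma map_singleton_tG (hγ : Measurable γ) (h : tG μ γ ≠ ⊤) :
    (μ.map γ) {tG μ γ} = μ {ω | γ ω = tG μ γ ∧ tG μ γ < ⊤} := by
  rw [Measure.map_apply hγ (measurableSet_singleton _)]
  simp [h.lt_top, preimage]

lemma tG_ne_top_of_caseB (hB : CaseB μ γ) : tG μ γ ≠ ⊤ := fun h => by
  simp [CaseB, h] at hB

lemma measure_singleton_tG_pos (hγ : Measurable γ) (hB : CaseB μ γ) :
    0 < (μ.map γ) {tG μ γ} := by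
  rw [map_singleton_tG hγ (tG_ne_top_of_caseB hB)]
  exact hB

lemma toNNReal_tG_mem_TT (hγ : Measurable γ) (hB : CaseB μ γ) : (tG μ γ).toNNReal ∈ TT μ γ := by
  rw [mem_TT_iff hγ, ENNReal.coe_toNNReal (tG_ne_top_of_caseB hB)]
  exact (measure_singleton_tG_pos hγ hB).trans_le
    (measure_mono (singleton_subset_iff.2 self_mem_Ici))

lemma locAC_of_density {F : ℝ≥0 → ℝ} {Z : ℝ≥0∞ → ℝ} (hZ : Measurable Z)
    (hint : ∀ t ∈ TT μ γ, IntegrableOn Z (Icc 0 (t : ℝ≥0∞)) (μ.map γ))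
    (hF : ∀ t : ℝ≥0, (t : ℝ≥0∞) < tG μ γ →
      F t - F 0 = ∫ x in Ioc 0 (t : ℝ≥0∞), Z x ∂(μ.map γ)) :
    LocAC μ γ F fun s => Z s := by
  have hZ' (t : ℝ≥0) : EqOn (fun x : ℝ≥0∞ => Z x.toNNReal) Z (Icc 0 (t : ℝ≥0∞)) := fun x hx => by
    simp only [ENNReal.coe_toNNReal (hx.2.trans_lt ENNReal.coe_lt_top).ne]
  refine ⟨⟨hZ.comp measurable_coe_nnreal_ennreal, fun t ht => (hint t ht).congr_fun (hZ' t).symm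
    measurableSet_Icc⟩, fun t ht => ?_⟩
  rw [setIntegral_congr_fun measurableSet_Ioc ((hZ' t).mono Ioc_subset_Icc_self), ← hF t ht]
  ring

variable [IsProbabilityMeasure μ]

lemma measure_le_lt_one_iff (hγ : Measurable γ) (x : ℝ≥0∞) :
    μ {ω | γ ω ≤ x} < 1 ↔ 0 < (μ.map γ) (Ioi x) := by
  have hm : MeasurableSet {ω | γ ω ≤ x} := measurableSet_le hγ measurable_const
  rw [Measure.map_apply hγ measurableSet_Ioi, ← tsub_pos_iff_lt, ← prob_compl_eq_one_sub hm]
  congr! 2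
  ext ω
  simp

lemma measure_Ioi_pos_of_lt_tG (hγ : Measurable γ) {x : ℝ≥0∞} (hx : x < tG μ γ) :
    0 < (μ.map γ) (Ioi x) := by
  obtain ⟨_, ⟨s, hs, rfl⟩, hxs⟩ := lt_sSup_iff.1 hx
  exact ((measure_le_lt_one_iff hγ s).1 hs).trans_le (measure_mono (Ioi_subset_Ioi hxs.le))

lemma measure_Ioi_tG (hγ : Measurable γ) : (μ.map γ) (Ioi (tG μ γ)) = 0 := by
  have hbeyond (s : ℝ≥0) (hs : tG μ γ < s) : (μ.map γ) (Ioi (s : ℝ≥0∞)) = 0 := by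
    refine nonpos_iff_eq_zero.1 (not_lt.1 fun h => hs.not_ge ?_)
    exact le_sSup (mem_image_of_mem (fun t : ℝ≥0 => (t : ℝ≥0∞))
      (show s ∈ {t : ℝ≥0 | μ {ω | γ ω ≤ t} < 1} from (measure_le_lt_one_iff hγ s).2 h))
  rcases eq_or_ne (tG μ γ) ⊤ with h | h
  · simp [h]
  obtain ⟨u, -, hu, hlim⟩ := exists_seq_strictAnti_tendsto' h.lt_top
  have hU : Ioi (tG μ γ) = ⋃ n, Ioi (u n) := by
    ext x
    simp only [mem_Ioi, mem_iUnion]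
    exact ⟨fun hx => (hlim.eventually (gt_mem_nhds hx)).exists, fun ⟨n, hn⟩ => (hu n).1.trans hn⟩
  rw [hU, measure_iUnion_null_iff]
  intro n
  lift u n to ℝ≥0 using (hu n).2.ne with s hs
  exact hbeyond s (hs ▸ (hu n).1)

lemma lt_tG_iff (hγ : Measurable γ) {x : ℝ≥0∞} : x < tG μ γ ↔ 0 < (μ.map γ) (Ioi x) :=
  ⟨measure_Ioi_pos_of_lt_tG hγ, fun h => not_le.1 fun hx =>
    h.ne' (measure_mono_null (Ioi_subset_Ioi hx) (measure_Ioi_tG hγ))⟩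

lemma tG_pos (hγ : Measurable γ) (hpos : 0 < μ {ω | 0 < γ ω}) : 0 < tG μ γ := by
  rw [lt_tG_iff hγ, Measure.map_apply hγ measurableSet_Ioi]
  exact hpos

lemma gbar_pos_of_lt_tG (hγ : Measurable γ) {t : ℝ≥0} (ht : (t : ℝ≥0∞) < tG μ γ) :
    0 < Gbar μ γ t := by
  rw [gbar_eq_measureReal_Ioi hγ]
  exact ENNReal.toReal_pos (measure_Ioi_pos_of_lt_tG hγ ht).ne' (measure_ne_top _ _)

lemma measure_Ici_tG (hγ : Measurable γ) : (μ.map γ) (Ici (tG μ γ)) = (μ.map γ) {tG μ γ} := by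
  rw [← measure_sdiff_null (measure_Ioi_tG hγ), Ici_sdiff_Ioi, Icc_self]

lemma mem_TT_of_lt_tG (hγ : Measurable γ) {t : ℝ≥0} (ht : (t : ℝ≥0∞) < tG μ γ) : t ∈ TT μ γ :=
  (mem_TT_iff hγ).2 ((measure_Ioi_pos_of_lt_tG hγ ht).trans_le (measure_mono Ioi_subset_Ici_self))

lemma le_tG_of_mem_TT (hγ : Measurable γ) {t : ℝ≥0} (ht : t ∈ TT μ γ) : (t : ℝ≥0∞) ≤ tG μ γ :=
  not_lt.1 fun h => ((mem_TT_iff hγ).1 ht).ne'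
    (measure_mono_null (Ici_subset_Ioi.2 h) (measure_Ioi_tG hγ))

lemma lt_tG_of_mem_TT (hγ : Measurable γ) (hA : CaseA μ γ) {t : ℝ≥0} (ht : t ∈ TT μ γ) :
    (t : ℝ≥0∞) < tG μ γ := by
  refine (le_tG_of_mem_TT hγ ht).lt_of_ne fun h => ((mem_TT_iff hγ).1 ht).ne' ?_
  rw [h, measure_Ici_tG hγ, map_singleton_tG hγ (h ▸ ENNReal.coe_ne_top)]
  exact hA

lemma tendsto_gbar_leftF_tG (hγ : Measurable γ) :
    Tendsto (Gbar μ γ) (leftF (tG μ γ)) (𝓝 ((μ.map γ).real {tG μ γ})) := by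
  have := Measure.isProbabilityMeasure_map (μ := μ) hγ.aemeasurable
  rw [measureReal_def, ← measure_Ici_tG hγ, ← measureReal_def]
  refine ((tendsto_measureReal_Ioi_nhdsLT _ _).comp tendsto_comap).congr fun t => ?_
  exact (gbar_eq_measureReal_Ioi hγ t).symm

lemma tendsto_leftF_iff_of_caseB (hγ : Measurable γ) (hpos : 0 < μ {ω | 0 < γ ω}) (hB : CaseB μ γ)
    {H : ℝ≥0 → ℝ} (hH : MemL1loc μ γ H) {F : ℝ≥0 → ℝ}
    (hF : HasConstantMean μ γ F H) :
    Tendsto F (leftF (tG μ γ)) (𝓝 (H (tG μ γ).toNNReal)) ↔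
      F 0 = (Gbar μ γ 0)⁻¹ * ∫ x in Ioc 0 (tG μ γ), H x.toNNReal ∂(μ.map γ) := by
  set a := tG μ γ
  set p := (μ.map γ).real {a}
  have ha : 0 < a := tG_pos hγ hpos
  have hp : 0 < p := ENNReal.toReal_pos (measure_singleton_tG_pos hγ hB).ne' (measure_ne_top _ _)
  have hG0 : Gbar μ γ 0 ≠ 0 := (gbar_pos_of_lt_tG hγ (by simpa using ha)).ne'
  have hint : IntegrableOn (fun x => H x.toNNReal) (Ioc 0 a) (μ.map γ) := by
    have := hH.2 _ (toNNReal_tG_mem_TT hγ hB)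
    rw [ENNReal.coe_toNNReal (tG_ne_top_of_caseB hB)] at this
    exact this.mono_set Ioc_subset_Icc_self
  have := leftF_neBot ha
  have hFG : Tendsto (fun t => F t * Gbar μ γ t) (leftF a)
      (𝓝 (F 0 * Gbar μ γ 0 - ∫ x in Ioo 0 a, H x.toNNReal ∂(μ.map γ))) :=
    (((tendsto_setIntegral_Ioc_nhdsLT (hint.mono_set Ioo_subset_Ioc_self)).comp
      tendsto_comap).const_sub _).congr' ((eventually_lt_leftF a).mono fun t ht => by
        simp only [Function.comp_apply]
        linarith [hF t ht])
  have hFlim : Tendsto F (leftF a)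
      (𝓝 ((F 0 * Gbar μ γ 0 - ∫ x in Ioo 0 a, H x.toNNReal ∂(μ.map γ)) / p)) :=
    (hFG.div (tendsto_gbar_leftF_tG hγ) hp.ne').congr' ((eventually_lt_leftF a).mono fun t ht =>
      mul_div_cancel_right₀ _ (gbar_pos_of_lt_tG hγ ht).ne')
  rw [setIntegral_Ioc_eq_setIntegral_Ioo_add ha hint, eq_inv_mul_iff_mul_eq₀ hG0]
  constructor
  · intro hlim
    have := tendsto_nhds_unique hFlim hlim
    field_simp at this
    linarith
  · intro h0
    convert hFlim using 2
    field_simp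
    linarith

lemma exists_density_of_hasConstantMean (hγ : Measurable γ) {H F : ℝ≥0 → ℝ}
    (hF : HasConstantMean μ γ F H)
    {e : ℝ≥0∞} (hH : IntegrableOn (fun x => H x.toNNReal) (Ioc 0 e) (μ.map γ))
    {q : ℝ} (hq : 0 < q) (hqG : ∀ x ≤ e, x < tG μ γ → q ≤ (μ.map γ).real (Ioi x)) :
    ∃ Z : ℝ≥0∞ → ℝ, Measurable Z ∧ Integrable Z (μ.map γ) ∧ ∀ a b, a ≤ b → b ≤ e →
      b < tG μ γ → F b.toNNReal - F a.toNNReal = ∫ x in Ioc a b, Z x ∂(μ.map γ) := by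
  have := Measure.isProbabilityMeasure_map (μ := μ) hγ.aemeasurable
  set k := (Ioc 0 e).indicator fun x => H x.toNNReal
  have hk : Integrable k (μ.map γ) := (integrable_indicator_iff measurableSet_Ioc).2 hH
  set c := F 0 * Gbar μ γ 0
  lift q to ℝ≥0 using hq.le
  -- equals `F` on `[0, e] ∩ [0, t_G)`; the truncations make its increments globally dominated
  have hdom : HasDominatedIncrements (μ.map γ) ((fun x => c - ∫ y in Iic x, k y ∂(μ.map γ)) *
      ((fun y : ℝ => (max y q)⁻¹) ∘ fun x => (μ.map γ).real (Ioi x))) := by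
    refine ((hasDominatedIncrements_setIntegral_Iic hk).const_sub c).mul
      (hasDominatedIncrements_measureReal_Ioi.comp_lipschitzWith
        (lipschitzWith_inv_max (mod_cast hq)))
      (A := (|c| + ∫ y, |k y| ∂(μ.map γ)).toNNReal) (B := q⁻¹) (fun x => ?_) fun x => ?_
    · calc |c - ∫ y in Iic x, k y ∂(μ.map γ)| ≤ |c| + |∫ y in Iic x, k y ∂(μ.map γ)| :=
            abs_sub _ _
        _ ≤ |c| + ∫ y, |k y| ∂(μ.map γ) := by
            gcongr
            exact abs_integral_le_integral_abs.trans
              (setIntegral_le_integral hk.abs (ae_of_all _ fun _ => abs_nonneg _))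
        _ ≤ _ := Real.le_coe_toNNReal _
    · rw [Function.comp_apply, abs_inv, abs_of_pos (hq.trans_le (le_max_right _ _)),
        NNReal.coe_inv]
      exact inv_anti₀ hq (le_max_right _ _)
  obtain ⟨Z, hZm, hZi, hZ⟩ := hdom.exists_density
  have hagree (x : ℝ≥0∞) (hxe : x ≤ e) (hxt : x < tG μ γ) : F x.toNNReal =
      (c - ∫ y in Iic x, k y ∂(μ.map γ)) * (max ((μ.map γ).real (Ioi x)) q)⁻¹ := by
    lift x to ℝ≥0 using (hxt.trans_le le_top).ne
    have hx : F x * Gbar μ γ x + ∫ y in Ioc 0 (x : ℝ≥0∞), H y.toNNReal ∂(μ.map γ) = c :=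
      hF x hxt
    rw [max_eq_left (hqG x hxe hxt), ← gbar_eq_measureReal_Ioi hγ,
      setIntegral_indicator measurableSet_Ioc, Iic_inter_Ioc_of_le hxe, ← hx,
      ENNReal.toNNReal_coe, add_sub_cancel_right, mul_inv_cancel_right₀
      (gbar_pos_of_lt_tG hγ hxt).ne']
  refine ⟨Z, hZm, hZi, fun a b hab hbe hbt => ?_⟩
  rw [hagree b hbe hbt, hagree a (hab.trans hbe) (hab.trans_lt hbt)]
  exact hZ a b hab

lemma exists_locAC_of_caseA (hγ : Measurable γ) (hpos : 0 < μ {ω | 0 < γ ω}) (hA : CaseA μ γ)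
    {H F : ℝ≥0 → ℝ} (hH : MemL1loc μ γ H) (hF : HasConstantMean μ γ F H) :
    ∃ z, LocAC μ γ F z := by
  obtain ⟨u, hu_mono, hu, hu_lim⟩ := exists_seq_strictMono_tendsto' (tG_pos hγ hpos)
  have hcover (x : ℝ≥0∞) (hx : x < tG μ γ) : ∃ n, x ≤ u n :=
    (hu_lim.eventually (lt_mem_nhds hx)).exists.imp fun _ => le_of_lt
  obtain ⟨Z, hZm, hZi, hZ⟩ := exists_density_of_monotone_exhaustion
    (f := fun x => F x.toNNReal) hu_mono.monotone fun n => by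
      lift u n to ℝ≥0 using ((hu n).2.trans_le le_top).ne with s hs
      have hs' : (s : ℝ≥0∞) < tG μ γ := hs ▸ (hu n).2
      obtain ⟨Z, hZm, hZi, hZ⟩ := exists_density_of_hasConstantMean hγ hF
        ((hH.2 s (mem_TT_of_lt_tG hγ hs')).mono_set Ioc_subset_Icc_self)
        (gbar_pos_of_lt_tG hγ hs') fun x hx _ => by
          rw [gbar_eq_measureReal_Ioi hγ]
          exact measureReal_mono (Ioi_subset_Ioi hx)
      exact ⟨Z, hZm, hZi.integrableOn, fun a b hab hb => hZ a b hab hb (hb.trans_lt hs')⟩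
  refine ⟨_, locAC_of_density hZm (fun t ht => ?_) fun t ht => ?_⟩
  · obtain ⟨n, hn⟩ := hcover _ (lt_tG_of_mem_TT hγ hA ht)
    exact (hZi n).mono_set (Icc_subset_Iic_self.trans (Iic_subset_Iic.2 hn))
  · obtain ⟨n, hn⟩ := hcover _ ht
    simpa using hZ n 0 t zero_le hn

lemma exists_locAC_of_caseB (hγ : Measurable γ) (hB : CaseB μ γ) {H F : ℝ≥0 → ℝ}
    (hH : MemL1loc μ γ H) (hF : HasConstantMean μ γ F H) : ∃ z, LocAC μ γ F z := by
  have htG := ENNReal.coe_toNNReal (tG_ne_top_of_caseB hB)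
  obtain ⟨Z, hZm, hZi, hZ⟩ := exists_density_of_hasConstantMean hγ hF
    (by simpa [htG] using (hH.2 _ (toNNReal_tG_mem_TT hγ hB)).mono_set Ioc_subset_Icc_self)
    (ENNReal.toReal_pos (measure_singleton_tG_pos hγ hB).ne' (measure_ne_top _ _))
    fun x _ hx => measureReal_mono (singleton_subset_iff.2 hx)
  exact ⟨_, locAC_of_density hZm (fun _ _ => hZi.integrableOn) fun t ht => by
    simpa using hZ 0 t zero_le ht.le ht⟩

lemma formula_iff_hasConstantMean (hγ : Measurable γ) (H F : ℝ≥0 → ℝ) :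
    (∀ t : ℝ≥0, 0 < t → (t : ℝ≥0∞) < tG μ γ → F t = (Gbar μ γ t)⁻¹ *
      (F 0 * Gbar μ γ 0 - ∫ x in Ioc 0 (t : ℝ≥0∞), H x.toNNReal ∂(μ.map γ))) ↔
    HasConstantMean μ γ F H := by
  refine forall_congr' fun t => ?_
  rcases eq_zero_or_pos t with rfl | ht
  · simp
  rw [forall_prop_of_true ht]
  refine forall_congr' fun htG => ?_
  rw [eq_inv_mul_iff_mul_eq₀ (gbar_pos_of_lt_tG hγ htG).ne', mul_comm, eq_sub_iff_add_eq]

end WithMeasurableSpace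

section WithMeasurableSpace

variable [m : MeasurableSpace Ω]

/-- **Proposition 3 (a).** Given `H ∈ L¹_loc(dG)`, any `F` defined by
`F(t) = Ḡ(t)⁻¹ (F(0)Ḡ(0) − ∫_(0,t] H dG)` for `0 < t < t_G` — with `F(0)` arbitrary in
Case A and `F(0) = Ḡ(0)⁻¹ ∫_(0,t_G] H dG` in Case B — makes `(F,H)` satisfy Condition M;
and conversely any `F` such that `(F,H)` satisfies Condition M is of this form. -/
theorem stmt_7 (μ : Measure Ω) [IsProbabilityMeasure μ] (γ : Ω → ℝ≥0∞)
    (hγ : Measurable γ) (hpos : 0 < μ {ω | 0 < γ ω})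
    (H : ℝ≥0 → ℝ) (hH : MemL1loc μ γ H) :
    (∀ F : ℝ≥0 → ℝ,
      (∀ t : ℝ≥0, 0 < t → (t : ℝ≥0∞) < tG μ γ →
        F t = (Gbar μ γ t)⁻¹ *
          (F 0 * Gbar μ γ 0 - ∫ x in Ioc (0 : ℝ≥0∞) (t : ℝ≥0∞), H x.toNNReal ∂(μ.map γ))) →
      (CaseB μ γ →
        F 0 = (Gbar μ γ 0)⁻¹ *
          ∫ x in Ioc (0 : ℝ≥0∞) (tG μ γ), H x.toNNReal ∂(μ.map γ)) →
      CondM μ γ F H) ∧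
    (∀ F : ℝ≥0 → ℝ, CondM μ γ F H →
      (∀ t : ℝ≥0, 0 < t → (t : ℝ≥0∞) < tG μ γ →
        F t = (Gbar μ γ t)⁻¹ *
          (F 0 * Gbar μ γ 0 - ∫ x in Ioc (0 : ℝ≥0∞) (t : ℝ≥0∞), H x.toNNReal ∂(μ.map γ))) ∧
      (CaseB μ γ →
        F 0 = (Gbar μ γ 0)⁻¹ *
          ∫ x in Ioc (0 : ℝ≥0∞) (tG μ γ), H x.toNNReal ∂(μ.map γ))) := by
  refine ⟨fun F hformula hF0 => ?_, fun F ⟨_, _, hF, hlim⟩ => ?_⟩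
  · have hF := (formula_iff_hasConstantMean hγ H F).1 hformula
    refine ⟨?_, hH, hF, fun hB => (tendsto_leftF_iff_of_caseB hγ hpos hB hH hF).2 (hF0 hB)⟩
    rcases eq_zero_or_pos (μ {ω | γ ω = tG μ γ ∧ tG μ γ < ⊤}) with hA | hB
    exacts [exists_locAC_of_caseA hγ hpos hA hH hF, exists_locAC_of_caseB hγ hB hH hF]
  · exact ⟨(formula_iff_hasConstantMean hγ H F).2 hF,
      fun hB => (tendsto_leftF_iff_of_caseB hγ hpos hB hH hF).1 (hlim hB)⟩

end WithMeasurableSpace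

end SingleJump
end
end
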